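/- For all n ≥ 2, ‖W_n^+ − W_n^-‖_cb = 2, where W_n^± are the Holevo–Werner channels on M_n(ℂ). -/

import Mathlib

/-!
Both Holevo–Werner maps are unital and completely positive, with Kraus operators proportional to
`eᵢⱼ ± eⱼᵢ`. Hence each `W_n^± ⊗ id_k` is a contraction for the operator norm, and the triangle
inequality gives `‖(W_n^+ − W_n^-) ⊗ id_k‖ ≤ 2`.

For the lower bound, `(T ⊗ id_n)(s) = α 1 + β |Ω⟩⟨Ω|` for the flip `s` (a permutation matrix,
so of norm `1`) and any map `T x = α Tr(x) 1 + β xᵀ`, where `Ω = ∑ᵢ eᵢ ⊗ eᵢ` has `⟨Ω, Ω⟩ = n`.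
So `Ω` is an eigenvector with eigenvalue `α + nβ`, which for `W_n^+ − W_n^-` is
`(1 + n)/(n + 1) + (n − 1)/(n − 1) = 2`.
-/

open Matrix BigOperators

noncomputable section

abbrev Mat (I : Type*) [Fintype I] [DecidableEq I] := Matrix I I ℂ

/-- A linear map on a matrix algebra is completely positive iff it admits a Kraus
representation `x ↦ ∑ i, (a i)ᴴ * x * (a i)`. -/
def IsCP {I : Type*} [Fintype I] [DecidableEq I] (T : Mat I →ₗ[ℂ] Mat I) : Prop :=
  ∃ (d : ℕ) (a : Fin d → Mat I), ∀ x, T x = ∑ i, (a i)ᴴ * x * a i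

/-- Unital, completely positive, trace preserving. -/
def IsUCPT {I : Type*} [Fintype I] [DecidableEq I] (T : Mat I →ₗ[ℂ] Mat I) : Prop :=
  T 1 = 1 ∧ (∀ x, (T x).trace = x.trace) ∧ IsCP T

/-- `T` is a convex combination of inner automorphisms `x ↦ u* x u`. -/
def ConvAut {I : Type*} [Fintype I] [DecidableEq I] (T : Mat I →ₗ[ℂ] Mat I) : Prop :=
  ∃ (d : ℕ) (c : Fin d → ℝ) (u : Fin d → Mat I),
    (∀ i, 0 ≤ c i) ∧ (∑ i, c i = 1) ∧ (∀ i, u i ∈ Matrix.unitaryGroup I ℂ) ∧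
    ∀ x, T x = ∑ i, (c i : ℂ) • ((u i)ᴴ * x * u i)

/-- The tensor product `T ⊗ S` of linear maps on matrix algebras, acting on
`M_I ⊗ M_K ≅ M_{I×K}` (with the Kronecker identification). -/
def tensorMap {I K : Type*} [Fintype I] [DecidableEq I] [Fintype K] [DecidableEq K]
    (T : Mat I →ₗ[ℂ] Mat I) (S : Mat K →ₗ[ℂ] Mat K) :
    Mat (I × K) →ₗ[ℂ] Mat (I × K) where
  toFun M := ∑ p, ∑ q, ∑ v, ∑ w, M (p, v) (q, w) •
      ((T (Matrix.single p q 1)).kronecker (S (Matrix.single v w 1)))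
  map_add' M N := by
    simp [Matrix.add_apply, add_smul, Finset.sum_add_distrib]
  map_smul' c M := by
    simp [Matrix.smul_apply, smul_smul, Finset.smul_sum]

/-- Operator norm of a matrix acting on `ℓ²`. -/
def opNorm {I : Type*} [Fintype I] [DecidableEq I] (M : Mat I) : ℝ :=
  ‖Matrix.toEuclideanCLM (𝕜 := ℂ) M‖

/-- Norm of a linear map between matrix algebras (w.r.t. operator norms). -/
def mapNorm {I J : Type*} [Fintype I] [DecidableEq I] [Fintype J] [DecidableEq J]
    (T : Mat I →ₗ[ℂ] Mat J) : ℝ :=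
  sSup { r : ℝ | ∃ M, opNorm M ≤ 1 ∧ r = opNorm (T M) }

/-- The completely bounded norm: `sup_k ‖T ⊗ id_k‖`. -/
def cbNorm {I : Type*} [Fintype I] [DecidableEq I] (T : Mat I →ₗ[ℂ] Mat I) : ℝ :=
  ⨆ k : ℕ, mapNorm (tensorMap T (LinearMap.id (R := ℂ) (M := Mat (Fin (k + 1)))))

/-- cb-distance from `T` to a set of maps `P`. -/
def cbDist {I : Type*} [Fintype I] [DecidableEq I] (T : Mat I →ₗ[ℂ] Mat I)
    (P : (Mat I →ₗ[ℂ] Mat I) → Prop) : ℝ :=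
  sInf { r : ℝ | ∃ V, P V ∧ r = cbNorm (T - V) }

/-- Partial trace `id_I ⊗ τ_K` with `τ_K` the normalized trace. -/
def ptrace {I K : Type*} [Fintype I] [DecidableEq I] [Fintype K] [DecidableEq K]
    (M : Mat (I × K)) : Mat I :=
  Matrix.of fun i j => (Fintype.card K : ℂ)⁻¹ * ∑ s, M (i, s) (j, s)

open scoped Kronecker InnerProductSpace

theorem ContinuousLinearMap.norm_sum_star_mul_mul_le {𝕜 E ι : Type*} [RCLike 𝕜]
    [NormedAddCommGroup E] [InnerProductSpace 𝕜 E] [CompleteSpace E] [Fintype ι]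
    (m : E →L[𝕜] E) (b : ι → E →L[𝕜] E) (hb : ∑ i, star (b i) * b i = 1) :
    ‖∑ i, star (b i) * m * b i‖ ≤ ‖m‖ := by
  have sum_norm_sq (x : E) : ∑ i, ‖b i x‖ ^ 2 = ‖x‖ ^ 2 := by
    simpa [_root_.sum_apply, sum_inner, star_eq_adjoint, adjoint_inner_left, inner_self_eq_norm_sq]
      using congrArg (fun T : E →L[𝕜] E => RCLike.re ⟪T x, x⟫_𝕜) hb
  refine opNorm_le_of_re_inner_le (norm_nonneg m) fun x y hx hy => ?_
  calc RCLike.re ⟪(∑ i, star (b i) * m * b i) x, y⟫_𝕜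
      = ∑ i, RCLike.re ⟪m (b i x), b i y⟫_𝕜 := by
        simp [sum_inner, star_eq_adjoint, adjoint_inner_left]
    _ ≤ ∑ i, ‖m‖ * (‖b i x‖ * ‖b i y‖) := Finset.sum_le_sum fun i _ =>
        (RCLike.re_le_norm _).trans <| (norm_inner_le_norm _ _).trans <| by
          rw [← mul_assoc]; gcongr; exact le_opNorm m _
    _ ≤ ‖m‖ * (√(∑ i, ‖b i x‖ ^ 2) * √(∑ i, ‖b i y‖ ^ 2)) := by
        rw [← Finset.mul_sum]; gcongr; exact Real.sum_mul_le_sqrt_mul_sqrt _ _ _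
    _ = ‖m‖ := by simp [sum_norm_sq, hx, hy]

theorem Matrix.sum_kronecker {ι R l m n p : Type*} [CommSemiring R] (s : Finset ι)
    (A : ι → Matrix l m R) (B : Matrix n p R) : (∑ i ∈ s, A i) ⊗ₖ B = ∑ i ∈ s, A i ⊗ₖ B :=
  (kroneckerBilinear (R := R) (α := R)).map_sum₂ _ _ _

section

variable {I : Type*} [DecidableEq I]

variable (I) in
def maxEntangled : I × I → ℂ := fun p => if p.1 = p.2 then 1 else 0

theorem maxEntangled_ne_zero [Nonempty I] : maxEntangled I ≠ 0 := fun h => by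
  obtain ⟨i⟩ := ‹Nonempty I›
  simpa [maxEntangled] using congrFun h (i, i)

variable [Fintype I] {K : Type*} [Fintype K] [DecidableEq K]

theorem maxEntangled_dotProduct_self : maxEntangled I ⬝ᵥ maxEntangled I = Fintype.card I := by
  simp [maxEntangled, dotProduct, Fintype.sum_prod_type]

theorem opNorm_sub_le (M N : Mat I) : opNorm (M - N) ≤ opNorm M + opNorm N := by
  simpa only [opNorm, map_sub] using norm_sub_le _ _

theorem opNorm_permMatrix_le (σ : Equiv.Perm I) : opNorm (σ.permMatrix ℂ) ≤ 1 := by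
  open scoped Matrix.Norms.L2Operator in exact permMatrix_l2_opNorm_le σ

theorem norm_le_opNorm_of_mulVec_eq_smul {A : Mat I} {v : I → ℂ} {c : ℂ} (hv : v ≠ 0)
    (h : A *ᵥ v = c • v) : ‖c‖ ≤ opNorm A := by
  have := (toEuclideanCLM (𝕜 := ℂ) A).le_opNorm (WithLp.toLp 2 v)
  rw [toEuclideanCLM_toLp, h, WithLp.toLp_smul, norm_smul] at this
  exact le_of_mul_le_mul_right this (norm_pos_iff.2 (by simpa using hv))

theorem opNorm_sum_conjTranspose_mul_mul_le {ι : Type*} [Fintype ι] (M : Mat I) (a : ι → Mat I)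
    (ha : ∑ i, (a i)ᴴ * a i = 1) : opNorm (∑ i, (a i)ᴴ * M * a i) ≤ opNorm M := by
  simp only [opNorm, ← star_eq_conjTranspose, map_sum, map_mul, map_star]
  refine ContinuousLinearMap.norm_sum_star_mul_mul_le _ _ ?_
  simpa only [← star_eq_conjTranspose, map_sum, map_mul, map_star, map_one] using
    congrArg (toEuclideanCLM (𝕜 := ℂ) (n := I)) ha

theorem mapNorm_le {T : Mat I →ₗ[ℂ] Mat K} {c : ℝ} (h : ∀ M, opNorm M ≤ 1 → opNorm (T M) ≤ c) :
    mapNorm T ≤ c :=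
  csSup_le ⟨_, 0, by simp [opNorm], rfl⟩ (by rintro _ ⟨M, hM, rfl⟩; exact h M hM)

theorem le_mapNorm {T : Mat I →ₗ[ℂ] Mat K} {c : ℝ} (h : ∀ M, opNorm M ≤ 1 → opNorm (T M) ≤ c)
    {M : Mat I} (hM : opNorm M ≤ 1) : opNorm (T M) ≤ mapNorm T :=
  le_csSup ⟨c, by rintro _ ⟨M, hM, rfl⟩; exact h M hM⟩ ⟨M, hM, rfl⟩

theorem tensorMap_single (T : Mat I →ₗ[ℂ] Mat I) (S : Mat K →ₗ[ℂ] Mat K) (p q : I) (v w : K)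
    (c : ℂ) :
    tensorMap T S (single (p, v) (q, w) c) = c • T (single p q 1) ⊗ₖ S (single v w 1) := by
  simp [tensorMap, single_apply, ite_and, Finset.sum_ite_eq]

theorem tensorMap_sub_left (T T' : Mat I →ₗ[ℂ] Mat I) (S : Mat K →ₗ[ℂ] Mat K) :
    tensorMap (T - T') S = tensorMap T S - tensorMap T' S := by
  ext M : 1
  ext ⟨a, b⟩ ⟨c, d⟩
  simp [tensorMap, Matrix.sum_apply, sub_mul, mul_sub, Finset.sum_sub_distrib]

theorem tensorMap_id_of_kraus {ι : Type*} [Fintype ι] (T : Mat I →ₗ[ℂ] Mat I) (a : ι → Mat I)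
    (hT : ∀ x, T x = ∑ i, (a i)ᴴ * x * a i) (M : Mat (I × K)) :
    tensorMap T LinearMap.id M = ∑ i, (a i ⊗ₖ (1 : Mat K))ᴴ * M * (a i ⊗ₖ (1 : Mat K)) := by
  induction M using Matrix.induction_on' with
  | h_zero => simp
  | h_add M N hM hN => simp [hM, hN, Matrix.mul_add, Matrix.add_mul, Finset.sum_add_distrib]
  | h_std_basis pv qw c =>
    obtain ⟨p, v⟩ := pv
    obtain ⟨q, w⟩ := qw
    have hsingle : single (p, v) (q, w) c = c • single p q 1 ⊗ₖ single v w (1 : ℂ) := by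
      rw [single_kronecker_single, one_mul, smul_single, smul_eq_mul, mul_one]
    rw [tensorMap_single, LinearMap.id_apply, hT, hsingle, sum_kronecker, Finset.smul_sum]
    refine Finset.sum_congr rfl fun i _ => ?_
    rw [conjTranspose_kronecker, conjTranspose_one, Matrix.mul_smul, Matrix.smul_mul,
      ← mul_kronecker_mul, ← mul_kronecker_mul, Matrix.mul_one, Matrix.one_mul]

theorem opNorm_tensorMap_id_le {T : Mat I →ₗ[ℂ] Mat I} (hT : IsCP T) (hT1 : T 1 = 1)
    (M : Mat (I × K)) : opNorm (tensorMap T LinearMap.id M) ≤ opNorm M := by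
  obtain ⟨d, a, ha⟩ := hT
  rw [tensorMap_id_of_kraus T a ha]
  refine opNorm_sum_conjTranspose_mul_mul_le M _ ?_
  have hunital : ∑ i, (a i)ᴴ * a i = 1 := by simpa [hT1] using (ha 1).symm
  simp only [conjTranspose_kronecker, conjTranspose_one, ← mul_kronecker_mul, Matrix.one_mul]
  rw [← sum_kronecker, hunital, one_kronecker_one]

theorem opNorm_tensorMap_id_sub_le {T S : Mat I →ₗ[ℂ] Mat I} (hT : IsCP T) (hT1 : T 1 = 1)
    (hS : IsCP S) (hS1 : S 1 = 1) (M : Mat (I × K)) :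
    opNorm (tensorMap (T - S) LinearMap.id M) ≤ 2 * opNorm M := by
  rw [tensorMap_sub_left, LinearMap.sub_apply, two_mul]
  exact (opNorm_sub_le _ _).trans
    (add_le_add (opNorm_tensorMap_id_le hT hT1 M) (opNorm_tensorMap_id_le hS hS1 M))

theorem isCP_of_eq_smul_sum {ι : Type*} [Fintype ι] {T : Mat I →ₗ[ℂ] Mat I} (c : ℝ) (hc : 0 ≤ c)
    (a : ι → Mat I) (hT : ∀ x, T x = (c : ℂ) • ∑ i, (a i)ᴴ * x * a i) : IsCP T := by
  refine ⟨Fintype.card ι, fun k => (√c : ℂ) • a ((Fintype.equivFin ι).symm k), fun x => ?_⟩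
  rw [hT, Finset.smul_sum, ← (Fintype.equivFin ι).symm.sum_comp]
  refine Finset.sum_congr rfl fun i _ => ?_
  simp [smul_smul, Real.mul_self_sqrt hc]

theorem sum_conjTranspose_mul_mul_single_add_smul_single (ε : ℝ) (x : Mat I) :
    ∑ p : I × I, (single p.1 p.2 1 + (ε : ℂ) • single p.2 p.1 1)ᴴ * x *
        (single p.1 p.2 1 + (ε : ℂ) • single p.2 p.1 1)
      = ((1 + ε ^ 2 : ℝ) * x.trace) • (1 : Mat I) + ((2 * ε : ℝ) : ℂ) • xᵀ := by
  ext a b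
  simp only [smul_single, smul_eq_mul, mul_one, conjTranspose_add, conjTranspose_single, star_one,
    RCLike.star_def, Complex.conj_ofReal, Matrix.add_mul, Matrix.mul_add, single_mul_mul_single,
    one_mul, Matrix.sum_apply, Matrix.add_apply, single_apply, ite_and, Finset.sum_add_distrib,
    Fintype.sum_prod_type, Finset.sum_ite_eq', Finset.mem_univ, ↓reduceIte, Finset.sum_ite_irrel,
    Finset.sum_const_zero, Complex.ofReal_add, Complex.ofReal_one, Complex.ofReal_pow, trace,
    diag_apply, Complex.ofReal_mul, Complex.ofReal_ofNat, Matrix.smul_apply, one_apply, mul_ite,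
    mul_zero, transpose_apply]
  split_ifs
  · rw [← Finset.sum_mul, ← Finset.mul_sum]
    ring
  · ring

theorem isCP_of_eq_smul_trace_add_smul_transpose {T : Mat I →ₗ[ℂ] Mat I} (c ε : ℝ) (hc : 0 ≤ c)
    (hε : ε ^ 2 = 1) (hT : ∀ x, T x = (c : ℂ) • (x.trace • (1 : Mat I) + (ε : ℂ) • xᵀ)) :
    IsCP T :=
  isCP_of_eq_smul_sum (c / 2) (by positivity) _ fun x => by
    rw [hT, sum_conjTranspose_mul_mul_single_add_smul_single, hε]
    push_cast
    module

theorem tensorMap_id_swap_apply (T : Mat I →ₗ[ℂ] Mat I) (a b c d : I) :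
    tensorMap T LinearMap.id (Equiv.Perm.permMatrix ℂ (Equiv.prodComm I I)) (a, b) (c, d)
      = T (single d b 1) a c := by
  simp [tensorMap, Matrix.sum_apply, PEquiv.toMatrix_apply, single_apply, ite_and]

theorem tensorMap_id_swap {T : Mat I →ₗ[ℂ] Mat I} (α β : ℂ)
    (hT : ∀ x, T x = α • (x.trace • (1 : Mat I)) + β • xᵀ) :
    tensorMap T LinearMap.id (Equiv.Perm.permMatrix ℂ (Equiv.prodComm I I))
      = α • (1 : Mat (I × I)) + β • vecMulVec (maxEntangled I) (maxEntangled I) := by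
  ext ⟨a, b⟩ ⟨c, d⟩
  rw [tensorMap_id_swap_apply, hT]
  simp only [Matrix.add_apply, Matrix.smul_apply, Matrix.one_apply, vecMulVec_apply, maxEntangled,
    transpose_apply, single_apply, trace, diag, Finset.sum_ite_eq, Finset.mem_univ, if_true,
    smul_eq_mul, Prod.mk.injEq, ite_and]
  grind

theorem tensorMap_id_swap_mulVec_maxEntangled {T : Mat I →ₗ[ℂ] Mat I} (α β : ℂ)
    (hT : ∀ x, T x = α • (x.trace • (1 : Mat I)) + β • xᵀ) :
    tensorMap T LinearMap.id (Equiv.Perm.permMatrix ℂ (Equiv.prodComm I I)) *ᵥ maxEntangled I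
      = (α + Fintype.card I * β) • maxEntangled I := by
  rw [tensorMap_id_swap α β hT, add_mulVec, smul_mulVec, smul_mulVec, one_mulVec, vecMulVec_mulVec,
    maxEntangled_dotProduct_self]
  simp only [op_smul_eq_smul]
  module

end

theorem isCP_and_map_one_of_holevoWerner_plus {n : ℕ} {W : Mat (Fin n) →ₗ[ℂ] Mat (Fin n)}
    (hW : ∀ x, W x = ((n : ℂ) + 1)⁻¹ • (x.trace • (1 : Mat (Fin n)) + xᵀ)) :
    IsCP W ∧ W 1 = 1 := by
  refine ⟨isCP_of_eq_smul_trace_add_smul_transpose ((n : ℝ) + 1)⁻¹ 1 (by positivity) (by norm_num)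
    fun x => by rw [hW]; push_cast; simp, ?_⟩
  rw [hW, trace_one, transpose_one, Fintype.card_fin]
  match_scalars
  field_simp

theorem isCP_and_map_one_of_holevoWerner_minus {n : ℕ} (hn : 2 ≤ n)
    {W : Mat (Fin n) →ₗ[ℂ] Mat (Fin n)}
    (hW : ∀ x, W x = ((n : ℂ) - 1)⁻¹ • (x.trace • (1 : Mat (Fin n)) - xᵀ)) :
    IsCP W ∧ W 1 = 1 := by
  have hn1 : (n : ℂ) - 1 ≠ 0 := sub_ne_zero.2 (by norm_cast; omega)
  refine ⟨isCP_of_eq_smul_trace_add_smul_transpose ((n : ℝ) - 1)⁻¹ (-1)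
    (inv_nonneg.2 (sub_nonneg.2 (by norm_cast; omega))) (by norm_num)
    fun x => by rw [hW]; push_cast; simp [sub_eq_add_neg], ?_⟩
  rw [hW, trace_one, transpose_one, Fintype.card_fin]
  match_scalars
  field_simp

theorem holevoWerner_diff_tensorMap_id_swap_mulVec {n : ℕ} (hn : 2 ≤ n)
    {Wp Wm : Mat (Fin n) →ₗ[ℂ] Mat (Fin n)}
    (hWp : ∀ x, Wp x = ((n : ℂ) + 1)⁻¹ • (x.trace • (1 : Mat (Fin n)) + xᵀ))
    (hWm : ∀ x, Wm x = ((n : ℂ) - 1)⁻¹ • (x.trace • (1 : Mat (Fin n)) - xᵀ)) :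
    tensorMap (Wp - Wm) LinearMap.id (Equiv.Perm.permMatrix ℂ (Equiv.prodComm (Fin n) (Fin n)))
        *ᵥ maxEntangled (Fin n) = (2 : ℂ) • maxEntangled (Fin n) := by
  have hn1 : (n : ℂ) - 1 ≠ 0 := sub_ne_zero.2 (by norm_cast; omega)
  have hdiff (x : Mat (Fin n)) : (Wp - Wm) x = (((n : ℂ) + 1)⁻¹ - ((n : ℂ) - 1)⁻¹) • (x.trace • 1)
      + (((n : ℂ) + 1)⁻¹ + ((n : ℂ) - 1)⁻¹) • xᵀ := by
    rw [LinearMap.sub_apply, hWp, hWm]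
    module
  rw [tensorMap_id_swap_mulVec_maxEntangled _ _ hdiff, Fintype.card_fin]
  congr 1
  field_simp
  ring

/-- `‖W_n^+ − W_n^-‖_cb = 2` for all `n ≥ 2`. -/
theorem cbNorm_holevoWerner_diff {n : ℕ} (hn : 2 ≤ n)
    (Wp Wm : Mat (Fin n) →ₗ[ℂ] Mat (Fin n))
    (hWp : ∀ x, Wp x = ((n : ℂ) + 1)⁻¹ • (x.trace • (1 : Mat (Fin n)) + xᵀ))
    (hWm : ∀ x, Wm x = ((n : ℂ) - 1)⁻¹ • (x.trace • (1 : Mat (Fin n)) - xᵀ)) :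
    cbNorm (Wp - Wm) = 2 := by
  obtain ⟨hWp_cp, hWp1⟩ := isCP_and_map_one_of_holevoWerner_plus hWp
  obtain ⟨hWm_cp, hWm1⟩ := isCP_and_map_one_of_holevoWerner_minus hn hWm
  have hcontr (K : Type) [Fintype K] [DecidableEq K] (M : Mat (Fin n × K)) (hM : opNorm M ≤ 1) :
      opNorm (tensorMap (Wp - Wm) LinearMap.id M) ≤ 2 :=
    (opNorm_tensorMap_id_sub_le hWp_cp hWp1 hWm_cp hWm1 M).trans (by linarith)
  have hbound (k : ℕ) : mapNorm (tensorMap (Wp - Wm) (LinearMap.id (M := Mat (Fin (k + 1))))) ≤ 2 :=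
    mapNorm_le (hcontr _)
  refine le_antisymm (ciSup_le hbound) ?_
  obtain ⟨m, rfl⟩ : ∃ m, n = m + 1 := ⟨n - 1, by omega⟩
  calc (2 : ℝ) = ‖(2 : ℂ)‖ := by simp
    _ ≤ _ := norm_le_opNorm_of_mulVec_eq_smul maxEntangled_ne_zero
      (holevoWerner_diff_tensorMap_id_swap_mulVec hn hWp hWm)
    _ ≤ _ := le_mapNorm (hcontr _) (opNorm_permMatrix_le _)
    _ ≤ cbNorm (Wp - Wm) := le_ciSup ⟨2, Set.forall_mem_range.2 hbound⟩ m
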